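/- Define the normalized invariants I¹² = Dᵛⁱ I¹¹ + I¹¹I⁰³ − I¹¹ + I⁰³ and I²¹ = Dᵘⁱ I¹¹ − 2(I¹¹)² + (I¹¹+1)(Dᵛⁱ I¹¹ + I¹¹I⁰³ − I¹¹ + I⁰³). With the explicit formulas I¹¹ = −2v²(4f_u−2vf_uv+Wf_vv)/W², I⁰³ = 2v³f_vvv/W, Dᵘⁱ = (2v²/W)(D_u − (1/2)vf_vv D_v), Dᵛⁱ = vD_v (W = 2f−2vf_v+v²f_vv ≠ 0), the quantity I¹² coincides with the invariantization ι(f_uvv) computed from the moving frame, i.e. with the value of D_ũ D_ṽ² f̃ evaluated at the frame C₁ = W/(2v), C₂ = f_v−vf_vv, φ' = W/(2v²), φ'' = (W/(4v²))f_vv, φ''' = (W/(4v⁴))(2f_u+(f−vf_v+v²f_vv)f_vv). -/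

import Mathlib

noncomputable section

/-- Partial derivative with respect to the first argument (total derivative D_u). -/
def pd1 (g : ℝ → ℝ → ℝ) (a b : ℝ) : ℝ := deriv (fun a' => g a' b) a
/-- Partial derivative with respect to the second argument (total derivative D_v). -/
def pd2 (g : ℝ → ℝ → ℝ) (a b : ℝ) : ℝ := deriv (fun b' => g a b') b
/-- Smoothness of a function of two real variables. -/
def Smooth2 (g : ℝ → ℝ → ℝ) : Prop := ContDiff ℝ (⊤ : ℕ∞) (fun p : ℝ × ℝ => g p.1 p.2)

/-- The transformed variable ṽ = φ'(u) v / C₁, as a function of (u,v). -/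
def Vtil (φ : ℝ → ℝ) (C₁ : ℝ) : ℝ → ℝ → ℝ := fun u v => deriv φ u * v / C₁

/-- The transformed arbitrary element f̃ = C₁⁻²(φ'f − C₂φ'v − φ''v²), as a function of (u,v). -/
def Ftil (f : ℝ → ℝ → ℝ) (φ : ℝ → ℝ) (C₁ C₂ : ℝ) : ℝ → ℝ → ℝ :=
  fun u v => (C₁ ^ 2)⁻¹ *
    (deriv φ u * f u v - C₂ * deriv φ u * v - deriv (deriv φ) u * v ^ 2)

/-- The implicit total differentiation operator D_ũ = (1/φ')D_u − (φ''/(φ')²) v D_v. -/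
def Dut (φ : ℝ → ℝ) (g : ℝ → ℝ → ℝ) : ℝ → ℝ → ℝ :=
  fun u v => (deriv φ u)⁻¹ * pd1 g u v -
    deriv (deriv φ) u / (deriv φ u) ^ 2 * v * pd2 g u v

/-- The implicit total differentiation operator D_ṽ = (C₁/φ') D_v. -/
def Dvt (φ : ℝ → ℝ) (C₁ : ℝ) (g : ℝ → ℝ → ℝ) : ℝ → ℝ → ℝ :=
  fun u v => C₁ / deriv φ u * pd2 g u v

/-- The relative invariant W = 2f − 2v f_v + v² f_vv. -/
def Wrel (f : ℝ → ℝ → ℝ) : ℝ → ℝ → ℝ :=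
  fun u v => 2 * f u v - 2 * v * pd2 f u v + v ^ 2 * pd2 (pd2 f) u v

/-- The relative conditional invariant S = 2f_u − v f_uv. -/
def Srel (f : ℝ → ℝ → ℝ) : ℝ → ℝ → ℝ :=
  fun u v => 2 * pd1 f u v - v * pd2 (pd1 f) u v

def DvInv (g : ℝ → ℝ → ℝ) : ℝ → ℝ → ℝ := fun u v => v * pd2 g u v

def I03 (f : ℝ → ℝ → ℝ) : ℝ → ℝ → ℝ :=
  fun u v => 2 * v ^ 3 * pd2 (pd2 (pd2 f)) u v / Wrel f u v

def I11 (f : ℝ → ℝ → ℝ) : ℝ → ℝ → ℝ :=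
  fun u v => -2 * v ^ 2 *
    (4 * pd1 f u v - 2 * v * pd2 (pd1 f) u v + Wrel f u v * pd2 (pd2 f) u v) /
    (Wrel f u v) ^ 2

abbrev Sm (g : ℝ → ℝ → ℝ) : Prop :=
  ContDiff ℝ ((⊤ : ℕ∞) : WithTop ℕ∞) (fun p : ℝ × ℝ => g p.1 p.2)

lemma Smooth2.sm {g : ℝ → ℝ → ℝ} (hg : Smooth2 g) : Sm g := hg.of_le (by simp)

lemma hasDerivAt_of_eq {h g : ℝ → ℝ} (he : ∀ x, h x = g x) {d x : ℝ}
    (hg : HasDerivAt g d x) : HasDerivAt h d x :=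
  hg.congr_of_eventuallyEq (Filter.Eventually.of_forall he)

lemma pd1_eq_of_hasDerivAt {g : ℝ → ℝ → ℝ} {a b d : ℝ}
    (h : HasDerivAt (fun a' => g a' b) d a) : pd1 g a b = d := h.deriv

lemma pd2_eq_of_hasDerivAt {g : ℝ → ℝ → ℝ} {a b d : ℝ}
    (h : HasDerivAt (fun b' => g a b') d b) : pd2 g a b = d := h.deriv

lemma hasDerivAt_pd1 {g : ℝ → ℝ → ℝ} (hg : Sm g) (a b : ℝ) :
    HasDerivAt (fun a' => g a' b) (pd1 g a b) a := by
  have h : DifferentiableAt ℝ (fun p : ℝ × ℝ => g p.1 p.2) (a, b) :=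
    (hg.differentiable (by simp)).differentiableAt
  have h2 : DifferentiableAt ℝ (fun a' => g a' b) a :=
    DifferentiableAt.comp (g := fun p : ℝ × ℝ => g p.1 p.2) (f := fun a' => ((a', b) : ℝ × ℝ)) a h (differentiableAt_id.prodMk (differentiableAt_const b))
  exact h2.hasDerivAt

lemma hasDerivAt_pd2 {g : ℝ → ℝ → ℝ} (hg : Sm g) (a b : ℝ) :
    HasDerivAt (fun b' => g a b') (pd2 g a b) b := by
  have h : DifferentiableAt ℝ (fun p : ℝ × ℝ => g p.1 p.2) (a, b) :=
    (hg.differentiable (by simp)).differentiableAt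
  have h2 : DifferentiableAt ℝ (fun b' => g a b') b :=
    h.comp b ((differentiableAt_const a).prodMk differentiableAt_id)
  exact h2.hasDerivAt

lemma pd1_eq {g : ℝ → ℝ → ℝ} (hg : Sm g) (a b : ℝ) :
    pd1 g a b = fderiv ℝ (fun p : ℝ × ℝ => g p.1 p.2) (a, b) (1, 0) := by
  have hline : HasDerivAt (fun a' => ((a', b) : ℝ × ℝ)) (1, 0) a :=
    (hasDerivAt_id a).prodMk (hasDerivAt_const a b)
  have h := ((hg.differentiable (by simp)) (a, b)).hasFDerivAt.comp_hasDerivAt a hline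
  exact (hasDerivAt_pd1 hg a b).unique h

lemma pd2_eq {g : ℝ → ℝ → ℝ} (hg : Sm g) (a b : ℝ) :
    pd2 g a b = fderiv ℝ (fun p : ℝ × ℝ => g p.1 p.2) (a, b) (0, 1) := by
  have hline : HasDerivAt (fun b' => ((a, b') : ℝ × ℝ)) (0, 1) b :=
    (hasDerivAt_const b a).prodMk (hasDerivAt_id b)
  have h := ((hg.differentiable (by simp)) (a, b)).hasFDerivAt.comp_hasDerivAt b hline
  exact (hasDerivAt_pd2 hg a b).unique h

lemma Sm.pd1 {g : ℝ → ℝ → ℝ} (hg : Sm g) : Sm (_root_.pd1 g) := by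
  have h : (fun p : ℝ × ℝ => _root_.pd1 g p.1 p.2)
      = fun p : ℝ × ℝ => fderiv ℝ (fun q : ℝ × ℝ => g q.1 q.2) p (1, 0) := by
    funext p; exact pd1_eq hg p.1 p.2
  rw [Sm, h]
  exact (hg.fderiv_right (le_of_eq rfl)).clm_apply contDiff_const

lemma Sm.pd2 {g : ℝ → ℝ → ℝ} (hg : Sm g) : Sm (_root_.pd2 g) := by
  have h : (fun p : ℝ × ℝ => _root_.pd2 g p.1 p.2)
      = fun p : ℝ × ℝ => fderiv ℝ (fun q : ℝ × ℝ => g q.1 q.2) p (0, 1) := by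
    funext p; exact pd2_eq hg p.1 p.2
  rw [Sm, h]
  exact (hg.fderiv_right (le_of_eq rfl)).clm_apply contDiff_const

lemma pd_comm {g : ℝ → ℝ → ℝ} (hg : Sm g) (a b : ℝ) :
    pd1 (pd2 g) a b = pd2 (pd1 g) a b := by
  set F := fun p : ℝ × ℝ => g p.1 p.2 with hF
  have hdF : Differentiable ℝ F := hg.differentiable (by simp)
  have hfd : ContDiff ℝ ((⊤ : ℕ∞) : WithTop ℕ∞) (fderiv ℝ F) := hg.fderiv_right (le_of_eq rfl)
  have hsnd : HasFDerivAt (fderiv ℝ F) (fderiv ℝ (fderiv ℝ F) (a, b)) (a, b) :=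
    ((hfd.differentiable (by simp)) (a, b)).hasFDerivAt
  have hsymm := second_derivative_symmetric (fun y => (hdF y).hasFDerivAt) hsnd
    ((1 : ℝ), (0 : ℝ)) ((0 : ℝ), (1 : ℝ))
  have h1 : HasDerivAt (fun a' => fderiv ℝ F (a', b) (0, 1))
      (fderiv ℝ (fderiv ℝ F) (a, b) (1, 0) (0, 1)) a := by
    have hline : HasDerivAt (fun a' => ((a', b) : ℝ × ℝ)) (1, 0) a :=
      (hasDerivAt_id a).prodMk (hasDerivAt_const a b)
    have h := HasDerivAt.clm_apply (c := fun a' => fderiv ℝ F (a', b)) (u := fun _ => ((0:ℝ),(1:ℝ))) (hsnd.comp_hasDerivAt a hline)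
      (hasDerivAt_const a (((0 : ℝ), (1 : ℝ)) : ℝ × ℝ))
    simpa using h
  have h2 : HasDerivAt (fun b' => fderiv ℝ F (a, b') (1, 0))
      (fderiv ℝ (fderiv ℝ F) (a, b) (0, 1) (1, 0)) b := by
    have hline : HasDerivAt (fun b' => ((a, b') : ℝ × ℝ)) (0, 1) b :=
      (hasDerivAt_const b a).prodMk (hasDerivAt_id b)
    have h := HasDerivAt.clm_apply (c := fun b' => fderiv ℝ F (a, b')) (u := fun _ => ((1:ℝ),(0:ℝ))) (hsnd.comp_hasDerivAt b hline)
      (hasDerivAt_const b (((1 : ℝ), (0 : ℝ)) : ℝ × ℝ))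
    simpa using h
  have e1 : pd1 (pd2 g) a b = fderiv ℝ (fderiv ℝ F) (a, b) (1, 0) (0, 1) := by
    have hfun : ∀ x, pd2 g x b = fderiv ℝ F (x, b) (0, 1) := fun x => pd2_eq hg x b
    exact (hasDerivAt_of_eq hfun h1).deriv
  have e2 : pd2 (pd1 g) a b = fderiv ℝ (fderiv ℝ F) (a, b) (0, 1) (1, 0) := by
    have hfun : ∀ x, pd1 g a x = fderiv ℝ F (a, x) (1, 0) := fun x => pd1_eq hg a x
    exact (hasDerivAt_of_eq hfun h2).deriv
  rw [e1, e2, hsymm]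


set_option maxHeartbeats 4000000 in
/-- the recurrence relation I¹² = Dᵛⁱ I¹¹ + I¹¹I⁰³ − I¹¹ + I⁰³ recovers
the normalized invariant I¹² = ι(f_uvv), i.e. the value of D_ũ D_ṽ² f̃ at the moving frame
C₁ = W/(2v), C₂ = f_v − v f_vv, φ' = W/(2v²), φ'' = (W/(4v²)) f_vv,
φ''' = (W/(4v⁴))(2f_u + (f − vf_v + v²f_vv) f_vv). -/
theorem statement14
    (f : ℝ → ℝ → ℝ) (hf : Smooth2 f) :
    ∀ u v : ℝ, v ≠ 0 → Wrel f u v ≠ 0 →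
    ∀ (φ : ℝ → ℝ) (C₁ C₂ : ℝ), ContDiff ℝ (⊤ : ℕ∞) φ →
      C₁ = Wrel f u v / (2 * v) →
      C₂ = pd2 f u v - v * pd2 (pd2 f) u v →
      deriv φ u = Wrel f u v / (2 * v ^ 2) →
      deriv (deriv φ) u = Wrel f u v / (4 * v ^ 2) * pd2 (pd2 f) u v →
      deriv (deriv (deriv φ)) u = Wrel f u v / (4 * v ^ 4) *
        (2 * pd1 f u v +
          (f u v - v * pd2 f u v + v ^ 2 * pd2 (pd2 f) u v) * pd2 (pd2 f) u v) →
      Dut φ (Dvt φ C₁ (Dvt φ C₁ (Ftil f φ C₁ C₂))) u v =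
        DvInv (I11 f) u v + I11 f u v * I03 f u v - I11 f u v + I03 f u v := by
  intro u v hv hW φ C₁ C₂ hφ hC1 hC2 hA hB hΓ
  have hsf : Sm f := hf.sm
  have hf2 : Sm (pd2 f) := hsf.pd2
  have hf22 : Sm (pd2 (pd2 f)) := hf2.pd2
  have hf1 : Sm (pd1 f) := hsf.pd1
  have hf21 : Sm (pd2 (pd1 f)) := hf1.pd2
  have hφi : ContDiff ℝ ((⊤ : ℕ∞) : WithTop ℕ∞) φ := hφ.of_le (by simp)
  have hφ1 := (contDiff_infty_iff_deriv.mp hφi).2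
  have hφ2 := (contDiff_infty_iff_deriv.mp hφ1).2
  have hd1 : HasDerivAt (deriv φ) (deriv (deriv φ) u) u :=
    ((contDiff_infty_iff_deriv.mp hφ1).1 u).hasDerivAt
  have hd2 : HasDerivAt (deriv (deriv φ)) (deriv (deriv (deriv φ)) u) u :=
    ((contDiff_infty_iff_deriv.mp hφ2).1 u).hasDerivAt
  have hAne : deriv φ u ≠ 0 := by
    rw [hA]; exact div_ne_zero hW (mul_ne_zero two_ne_zero (pow_ne_zero 2 hv))
  have hC1ne : C₁ ≠ 0 := by
    rw [hC1]; exact div_ne_zero hW (mul_ne_zero two_ne_zero hv)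
  -- step 1 : pd2 of Ftil
  have hFt : ∀ a b : ℝ, pd2 (Ftil f φ C₁ C₂) a b
      = (C₁ ^ 2)⁻¹ * (deriv φ a * pd2 f a b - C₂ * deriv φ a
          - deriv (deriv φ) a * (2 * b)) := by
    intro a b
    have key : HasDerivAt
        (fun x : ℝ => (C₁ ^ 2)⁻¹ * (deriv φ a * f a x - C₂ * deriv φ a * x
            - deriv (deriv φ) a * x ^ 2))
        ((C₁ ^ 2)⁻¹ * (deriv φ a * pd2 f a b - C₂ * deriv φ a
            - deriv (deriv φ) a * (2 * b))) b := by
      have h := ((((hasDerivAt_pd2 hsf a b).const_mul (deriv φ a)).sub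
          (HasDerivAt.const_mul (C₂ * deriv φ a) (hasDerivAt_id' b))).sub
          ((hasDerivAt_pow 2 b).const_mul (deriv (deriv φ) a))).const_mul
          ((C₁ ^ 2)⁻¹)
      refine h.congr_deriv ?_
      push_cast
      ring
    exact pd2_eq_of_hasDerivAt (g := Ftil f φ C₁ C₂)
      (hasDerivAt_of_eq (fun x => rfl) key)
  -- step 2 : value of the first Dvt
  have hG2 : ∀ a b : ℝ, Dvt φ C₁ (Ftil f φ C₁ C₂) a b
      = C₁ / deriv φ a * ((C₁ ^ 2)⁻¹ * (deriv φ a * pd2 f a b - C₂ * deriv φ a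
          - deriv (deriv φ) a * (2 * b))) := by
    intro a b
    show C₁ / deriv φ a * pd2 (Ftil f φ C₁ C₂) a b = _
    rw [hFt a b]
  -- step 3 : pd2 of the first Dvt
  have hG2d : ∀ a b : ℝ, pd2 (Dvt φ C₁ (Ftil f φ C₁ C₂)) a b
      = C₁ / deriv φ a * ((C₁ ^ 2)⁻¹ * (deriv φ a * pd2 (pd2 f) a b
          - deriv (deriv φ) a * 2)) := by
    intro a b
    have key : HasDerivAt
        (fun x : ℝ => C₁ / deriv φ a * ((C₁ ^ 2)⁻¹ * (deriv φ a * pd2 f a x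
            - C₂ * deriv φ a - deriv (deriv φ) a * (2 * x))))
        (C₁ / deriv φ a * ((C₁ ^ 2)⁻¹ * (deriv φ a * pd2 (pd2 f) a b
            - deriv (deriv φ) a * 2))) b := by
      have h := (((((hasDerivAt_pd2 hf2 a b).const_mul (deriv φ a)).sub
          (hasDerivAt_const b (C₂ * deriv φ a))).sub
          ((HasDerivAt.const_mul (2:ℝ) (hasDerivAt_id' b)).const_mul (deriv (deriv φ) a))).const_mul
          ((C₁ ^ 2)⁻¹)).const_mul (C₁ / deriv φ a)
      refine h.congr_deriv ?_
      ring
    exact pd2_eq_of_hasDerivAt (g := Dvt φ C₁ (Ftil f φ C₁ C₂))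
      (hasDerivAt_of_eq (fun x => hG2 a x) key)
  -- step 4 : value of the second Dvt
  have hG3 : ∀ a b : ℝ, Dvt φ C₁ (Dvt φ C₁ (Ftil f φ C₁ C₂)) a b
      = (deriv φ a)⁻¹ * pd2 (pd2 f) a b
        - 2 * deriv (deriv φ) a * ((deriv φ a) ^ 2)⁻¹ := by
    intro a b
    show C₁ / deriv φ a * pd2 (Dvt φ C₁ (Ftil f φ C₁ C₂)) a b = _
    rw [hG2d a b]
    rcases eq_or_ne (deriv φ a) 0 with h0 | h0
    · simp [h0]
    · field_simp
  -- step 5 : pd2 of the composite at (u,v)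
  have hQ : pd2 (Dvt φ C₁ (Dvt φ C₁ (Ftil f φ C₁ C₂))) u v
      = (deriv φ u)⁻¹ * pd2 (pd2 (pd2 f)) u v - 0 := by
    have key : HasDerivAt
        (fun x : ℝ => (deriv φ u)⁻¹ * pd2 (pd2 f) u x
            - 2 * deriv (deriv φ) u * ((deriv φ u) ^ 2)⁻¹)
        ((deriv φ u)⁻¹ * pd2 (pd2 (pd2 f)) u v - 0) v :=
      ((hasDerivAt_pd2 hf22 u v).const_mul ((deriv φ u)⁻¹)).sub
        (hasDerivAt_const v (2 * deriv (deriv φ) u * ((deriv φ u) ^ 2)⁻¹))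
    exact pd2_eq_of_hasDerivAt (g := Dvt φ C₁ (Dvt φ C₁ (Ftil f φ C₁ C₂)))
      (hasDerivAt_of_eq (fun x => hG3 u x) key)
  -- step 6 : pd1 of the composite at (u,v)
  have key6 := ((hd1.inv hAne).mul (hasDerivAt_pd1 hf22 u v)).sub
      ((hd2.const_mul 2).mul ((hd1.fun_pow (n := 2)).inv (pow_ne_zero 2 hAne)))
  have hP := pd1_eq_of_hasDerivAt (g := Dvt φ C₁ (Dvt φ C₁ (Ftil f φ C₁ C₂)))
      (hasDerivAt_of_eq (fun x => hG3 x v) key6)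
  -- Clairaut
  have hclf : pd1 (pd2 f) = pd2 (pd1 f) :=
    funext fun a => funext fun b => pd_comm hsf a b
  have hcl : pd1 (pd2 (pd2 f)) u v = pd2 (pd2 (pd1 f)) u v := by
    rw [pd_comm hf2 u v, hclf]
  rw [hcl] at hP
  -- the v-derivative of I11
  have hWd' : HasDerivAt (fun b => Wrel f u b)
      (2 * pd2 f u v - (2 * 1 * pd2 f u v + 2 * v * pd2 (pd2 f) u v)
        + ((2 : ℕ) * v ^ (2 - 1) * pd2 (pd2 f) u v + v ^ 2 * pd2 (pd2 (pd2 f)) u v)) v := by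
    have h := (((hasDerivAt_pd2 hsf u v).const_mul 2).sub
        ((HasDerivAt.const_mul (2:ℝ) (hasDerivAt_id' v)).mul (hasDerivAt_pd2 hf2 u v))).add
        ((hasDerivAt_pow 2 v).mul (hasDerivAt_pd2 hf22 u v))
    have h2 := hasDerivAt_of_eq (h := fun b => Wrel f u b) (fun x => rfl) h
    convert h2 using 1
    all_goals (push_cast; ring)
  have hNd := (((hasDerivAt_pow 2 v).const_mul (-2)).mul
      ((((hasDerivAt_pd2 hf1 u v).const_mul 4).sub
        ((HasDerivAt.const_mul (2:ℝ) (hasDerivAt_id' v)).mul (hasDerivAt_pd2 hf21 u v))).add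
        (hWd'.mul (hasDerivAt_pd2 hf22 u v))))
  have hDen := hWd'.fun_pow (n := 2)
  have hI11d := hNd.div hDen (pow_ne_zero 2 hW)
  have hpdI11 := pd2_eq_of_hasDerivAt (g := I11 f) (a := u) (b := v)
      (hasDerivAt_of_eq (fun x => rfl) hI11d)
  -- assemble
  have hWx : 2 * f u v - 2 * v * pd2 f u v + v ^ 2 * pd2 (pd2 f) u v ≠ 0 := by
    simpa [Wrel] using hW
  have hWy : 2 * (f u v - v * pd2 f u v) + v ^ 2 * pd2 (pd2 f) u v ≠ 0 := by
    intro h; apply hWx; linear_combination h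
  simp only [Dut, DvInv]
  simp only [Pi.mul_apply, Pi.sub_apply, Pi.add_apply, Pi.inv_apply, Pi.div_apply] at hP hpdI11
  rw [hP, hQ, hpdI11]
  simp only [I11, I03]
  rw [hA, hB, hΓ]
  simp only [Wrel]
  trans ((2 * v ^ 2 * (2 * v ^ 2 * pd2 (pd2 (pd1 f)) u v - 4 * pd1 f u v
      - 2 * f u v * pd2 (pd2 f) u v + 2 * v * pd2 f u v * pd2 (pd2 f) u v
      - v ^ 2 * (pd2 (pd2 f) u v) ^ 2)
      - 2 * v ^ 5 * pd2 (pd2 f) u v * pd2 (pd2 (pd2 f)) u v)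
      / (2 * f u v - 2 * v * pd2 f u v + v ^ 2 * pd2 (pd2 f) u v) ^ 2)
  · push_cast
    field_simp [hWx, hv, hWy]
    ring
  · push_cast
    field_simp [hWx, hv, hWy]
    ring
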